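/- arXiv:2410.04413 — 5 statements merged into one kernel-verified Lean document; each statement's English description precedes it below -/
import Mathlib

section
/- Let G be a finite simple graph and let F be an induced subgraph of G whose vertex set is partitioned into two nonempty parts S and T. Suppose 2e(F[S])/|S| > a, 2e(F[T])/|T| ≥ b, e_F(S,T)/|S| ≤ c and e_F(S,T)/|T| ≤ c, where a, b ≥ 0 and c > 0 are real numbers. Then λ₂(G) > (a + b − √((a−b)² + 4c²))/2. -/
open Classical in
/-- The adjacency matrix of a finite simple graph (over `ℝ`) is Hermitian. -/
lemma adjMatrix_isHermitian {V : Type*} [Fintype V] (G : SimpleGraph V) [DecidableRel G.Adj] :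
    (G.adjMatrix ℝ).IsHermitian := by
  ext i j
  simp [Matrix.conjTranspose_apply, SimpleGraph.adj_comm]

open Classical in
/-- The multiset of adjacency eigenvalues (with multiplicity) of a finite simple graph. -/
noncomputable def adjEigenvalues {V : Type*} [Fintype V] (G : SimpleGraph V) : Multiset ℝ :=
  Finset.univ.val.map (adjMatrix_isHermitian G).eigenvalues

open Classical in
/-- `lambda2 G` is the second largest adjacency eigenvalue (with multiplicity) of `G`:
the second entry of the list of all eigenvalues sorted in decreasing order, i.e. the entry at
position `|V| - 2` (0-indexed) of the increasingly sorted list. -/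
noncomputable def lambda2 {V : Type*} [Fintype V] (G : SimpleGraph V) : ℝ :=
  ((adjEigenvalues G).sort (· ≤ ·)).getD (Fintype.card V - 2) 0

/-- The number of ordered pairs `(u, v)` of adjacent vertices of `G` with `u ∈ A` and `v ∈ B`.
For disjoint sets `A` and `B` this is `e_G(A, B)`, the number of edges between `A` and `B`;
for `A = B` it is twice the number of edges of `G` inside `A`. -/
noncomputable def crossPairs {V : Type*} (G : SimpleGraph V) (A B : Set V) : ℕ :=
  {p : V × V | p.1 ∈ A ∧ p.2 ∈ B ∧ G.Adj p.1 p.2}.ncard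

/-!
Let `μ = (a + b - √((a - b)² + 4c²)) / 2`, the smaller eigenvalue of `!![a, c; c, b]`, and let `A`
be the adjacency matrix. For `w = x • 1_S + y • 1_T ≠ 0`,
`wᵀAw - μ‖w‖² = (2e(S) - μ|S|) x² + 2 e(S,T) x y + (2e(T) - μ|T|) y²`, and this form is positive
definite because `(2e(S) - μ|S|)(2e(T) - μ|T|) > (a - μ)(b - μ)|S||T| = c²|S||T| ≥ e(S,T)²`.
The span of `1_S` and `1_T` contains such a `w` orthogonal to a top eigenvector of `A`, and
expanding `w` in an orthonormal eigenbasis gives `wᵀAw ≤ λ₂(G) ‖w‖²`.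
-/

open Matrix Finset

theorem OrthonormalBasis.inner_map_self_le_of_inner_eq_zero {ι E : Type*} [Fintype ι]
    [NormedAddCommGroup E] [InnerProductSpace ℝ E] (b : OrthonormalBasis ι ℝ E)
    {T : E →ₗ[ℝ] E} {μ : ι → ℝ} (hT : ∀ i, T (b i) = μ i • b i) {i₀ : ι} {L : ℝ}
    (hL : ∀ i ≠ i₀, μ i ≤ L) {x : E} (hx : inner ℝ (b i₀) x = 0) :
    inner ℝ x (T x) ≤ L * inner ℝ x x := by
  have hTx : T x = ∑ i, (inner ℝ (b i) x * μ i) • b i := by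
    conv_lhs => rw [← b.sum_repr' x]
    rw [map_sum]
    simp only [map_smul, hT, smul_smul]
  rw [hTx, ← b.sum_inner_mul_inner x x, Finset.mul_sum, inner_sum]
  refine Finset.sum_le_sum fun i _ => ?_
  rw [inner_smul_right, real_inner_comm (b i) x]
  rcases eq_or_ne i i₀ with rfl | hi
  · simp [hx]
  · nlinarith [hL i hi, mul_self_nonneg (inner ℝ (b i) x)]

theorem Matrix.IsHermitian.dotProduct_mulVec_le_of_dotProduct_eq_zero {n : Type*} [Fintype n]
    [DecidableEq n] {A : Matrix n n ℝ} (hA : A.IsHermitian) {i₀ : n} {L : ℝ}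
    (hL : ∀ i ≠ i₀, hA.eigenvalues i ≤ L) {w : n → ℝ}
    (hw : ⇑(hA.eigenvectorBasis i₀) ⬝ᵥ w = 0) :
    w ⬝ᵥ (A *ᵥ w) ≤ L * (w ⬝ᵥ w) := by
  have hT (i : n) : toEuclideanLin A (hA.eigenvectorBasis i) =
      hA.eigenvalues i • hA.eigenvectorBasis i := by
    apply WithLp.ofLp_injective
    simpa using hA.mulVec_eigenvectorBasis i
  have := hA.eigenvectorBasis.inner_map_self_le_of_inner_eq_zero hT hL (x := WithLp.toLp 2 w)
    (by simpa [EuclideanSpace.inner_eq_star_dotProduct, dotProduct_comm] using hw)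
  simpa only [EuclideanSpace.inner_eq_star_dotProduct, toLpLin_apply, star_trivial,
    dotProduct_comm] using this

theorem Matrix.IsHermitian.sort_eigenvalues_eq_reverse_ofFn {n : Type*} [Fintype n] [DecidableEq n]
    {A : Matrix n n ℝ} (hA : A.IsHermitian) :
    (univ.val.map hA.eigenvalues).sort (· ≤ ·) = (List.ofFn hA.eigenvalues₀).reverse := by
  have : univ.val.map hA.eigenvalues = univ.val.map hA.eigenvalues₀ := by
    rw [← Multiset.map_univ_val_equiv (Fintype.equivOfCardEq (Fintype.card_fin _)).symm,
      Multiset.map_map]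
    rfl
  rw [this, Fin.univ_val_map, ← Multiset.coe_reverse, Multiset.coe_sort]
  apply List.mergeSort_of_pairwise
  simpa [List.pairwise_reverse] using hA.eigenvalues₀_antitone.sortedGE_ofFn.pairwise

theorem Matrix.IsHermitian.exists_forall_ne_eigenvalues_le_eigenvalues₀_one {n : Type*}
    [Fintype n] [DecidableEq n] {A : Matrix n n ℝ} (hA : A.IsHermitian)
    (h : 2 ≤ Fintype.card n) :
    ∃ i₀, ∀ i ≠ i₀, hA.eigenvalues i ≤ hA.eigenvalues₀ ⟨1, h⟩ := by
  set e : n ≃ Fin (Fintype.card n) := (Fintype.equivOfCardEq (Fintype.card_fin _)).symm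
  refine ⟨e.symm ⟨0, by omega⟩, fun i hi => hA.eigenvalues₀_antitone ?_⟩
  have : e i ≠ ⟨0, by omega⟩ := by rwa [ne_eq, ← e.eq_symm_apply]
  exact Fin.le_def.mpr (Nat.one_le_iff_ne_zero.mpr (Fin.val_ne_iff.mpr this))

open Classical in
theorem lambda2_eq_eigenvalues₀ {V : Type*} [Fintype V] (G : SimpleGraph V)
    (h : 2 ≤ Fintype.card V) : lambda2 G = (adjMatrix_isHermitian G).eigenvalues₀ ⟨1, h⟩ := by
  rw [lambda2, adjEigenvalues, Matrix.IsHermitian.sort_eigenvalues_eq_reverse_ofFn,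
    List.getD_eq_getElem _ _ (by simp; omega)]
  simp only [List.getElem_reverse, List.getElem_ofFn, List.length_ofFn]
  congr
  omega

open Classical in
theorem exists_forall_ne_eigenvalues_le_lambda2 {V : Type*} [Fintype V] (G : SimpleGraph V)
    (h : 2 ≤ Fintype.card V) :
    ∃ i₀, ∀ i ≠ i₀, (adjMatrix_isHermitian G).eigenvalues i ≤ lambda2 G :=
  lambda2_eq_eigenvalues₀ G h ▸
    (adjMatrix_isHermitian G).exists_forall_ne_eigenvalues_le_eigenvalues₀_one h

theorem Matrix.IsSymm.dotProduct_mulVec_comm {n R : Type*} [Fintype n] [CommSemiring R]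
    {A : Matrix n n R} (hA : A.IsSymm) (u v : n → R) : v ⬝ᵥ (A *ᵥ u) = u ⬝ᵥ (A *ᵥ v) := by
  rw [dotProduct_mulVec, ← mulVec_transpose, hA.eq, dotProduct_comm]

theorem Matrix.IsSymm.dotProduct_mulVec_smul_add_smul {n R : Type*} [Fintype n] [CommRing R]
    {A : Matrix n n R} (hA : A.IsSymm) (α β : R) (u v : n → R) :
    (α • u + β • v) ⬝ᵥ (A *ᵥ (α • u + β • v)) =
      α ^ 2 * (u ⬝ᵥ (A *ᵥ u)) + 2 * α * β * (u ⬝ᵥ (A *ᵥ v)) + β ^ 2 * (v ⬝ᵥ (A *ᵥ v)) := by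
  simp only [mulVec_add, mulVec_smul, add_dotProduct, dotProduct_add, smul_dotProduct,
    dotProduct_smul, smul_eq_mul, hA.dotProduct_mulVec_comm u v]
  ring

theorem dotProduct_smul_add_smul_self {n R : Type*} [Fintype n] [CommRing R] (α β : R)
    (u v : n → R) :
    (α • u + β • v) ⬝ᵥ (α • u + β • v) =
      α ^ 2 * (u ⬝ᵥ u) + 2 * α * β * (u ⬝ᵥ v) + β ^ 2 * (v ⬝ᵥ v) := by
  simp only [add_dotProduct, dotProduct_add, smul_dotProduct, dotProduct_smul, smul_eq_mul,
    dotProduct_comm v u]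
  ring

theorem Finset.indicator_one_dotProduct {V : Type*} [Fintype V] [DecidableEq V] (A B : Finset V) :
    (A : Set V).indicator 1 ⬝ᵥ (B : Set V).indicator (1 : V → ℝ) = #(A ∩ B) := by
  simp only [dotProduct, Set.indicator_apply, Finset.mem_coe, Pi.one_apply, mul_boole, ← ite_and,
    Finset.sum_boole]
  norm_cast
  congr 1
  ext
  simp [and_comm]

theorem crossPairs_eq_sum {V : Type*} [Fintype V] [DecidableEq V] (G : SimpleGraph V)
    [DecidableRel G.Adj] (A B : Finset V) :
    (crossPairs G A B : ℝ) = ∑ i, ∑ j, if i ∈ A ∧ j ∈ B ∧ G.Adj i j then 1 else 0 := by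
  rw [crossPairs, Set.ncard_eq_toFinset_card', ← Fintype.sum_prod_type', Finset.sum_boole]
  simp

theorem indicator_one_dotProduct_adjMatrix_mulVec {V : Type*} [Fintype V] (G : SimpleGraph V)
    [DecidableRel G.Adj] (A B : Finset V) :
    (A : Set V).indicator 1 ⬝ᵥ (G.adjMatrix ℝ *ᵥ (B : Set V).indicator 1) = crossPairs G A B := by
  classical
  rw [crossPairs_eq_sum, SimpleGraph.dotProduct_mulVec_adjMatrix]
  refine Fintype.sum_congr _ _ fun i => Fintype.sum_congr _ _ fun j => ?_
  by_cases hi : i ∈ A <;> by_cases hj : j ∈ B <;> simp [hi, hj]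

/-- The smaller eigenvalue of the symmetric matrix `!![a, c; c, b]`. -/
noncomputable def smallerEigenvalue (a b c : ℝ) : ℝ := (a + b - √((a - b) ^ 2 + 4 * c ^ 2)) / 2

section smallerEigenvalue

variable {a b c : ℝ}

theorem abs_sub_lt_sqrt_sq_add (hc : 0 < c) : |a - b| < √((a - b) ^ 2 + 4 * c ^ 2) :=
  abs_lt_of_sq_lt_sq (by rw [Real.sq_sqrt (by positivity)]; nlinarith) (Real.sqrt_nonneg _)

theorem sub_smallerEigenvalue_pos_left (hc : 0 < c) : 0 < a - smallerEigenvalue a b c := by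
  rw [smallerEigenvalue]
  linarith [neg_abs_le (a - b), abs_sub_lt_sqrt_sq_add (a := a) (b := b) hc]

theorem sub_smallerEigenvalue_pos_right (hc : 0 < c) : 0 < b - smallerEigenvalue a b c := by
  rw [smallerEigenvalue]
  linarith [le_abs_self (a - b), abs_sub_lt_sqrt_sq_add (a := a) (b := b) hc]

theorem sub_smallerEigenvalue_mul_sub_smallerEigenvalue :
    (a - smallerEigenvalue a b c) * (b - smallerEigenvalue a b c) = c ^ 2 := by
  rw [smallerEigenvalue]
  nlinarith [Real.sq_sqrt (show 0 ≤ (a - b) ^ 2 + 4 * c ^ 2 by positivity)]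

end smallerEigenvalue

theorem quadratic_form_pos {p q r x y : ℝ} (hp : 0 < p) (hq : q ^ 2 < p * r)
    (hxy : x ≠ 0 ∨ y ≠ 0) : 0 < p * x ^ 2 + 2 * q * x * y + r * y ^ 2 := by
  rcases eq_or_ne y 0 with rfl | hy
  · have hx : x ≠ 0 := hxy.resolve_right (not_not.mpr rfl)
    simpa using mul_pos hp (by positivity : 0 < x ^ 2)
  · have hy2 : 0 < y ^ 2 := by positivity
    have key : p * (p * x ^ 2 + 2 * q * x * y + r * y ^ 2) =
        (p * x + q * y) ^ 2 + (p * r - q ^ 2) * y ^ 2 := by ring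
    refine pos_of_mul_pos_right (key ▸ ?_) hp.le
    nlinarith [sq_nonneg (p * x + q * y), mul_pos (sub_pos.mpr hq) hy2]

/-- For `w = x • 1_S + y • 1_T` with `s = |S|`, `t = |T|`, `nS = 2e(S)`, `nT = 2e(T)` and
`e = e(S,T)`, the two sides are `μ ‖w‖²` and `wᵀAw`. -/
theorem smallerEigenvalue_mul_lt {a b c s t nS nT e x y : ℝ} (hc : 0 < c) (hs : 0 < s)
    (ht : 0 < t) (hnS : a < nS / s) (hnT : b ≤ nT / t) (he : 0 ≤ e) (hes : e / s ≤ c)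
    (het : e / t ≤ c) (hxy : x ≠ 0 ∨ y ≠ 0) :
    smallerEigenvalue a b c * (x ^ 2 * s + y ^ 2 * t) <
      x ^ 2 * nS + 2 * x * y * e + y ^ 2 * nT := by
  set μ := smallerEigenvalue a b c
  rw [lt_div_iff₀ hs] at hnS
  rw [le_div_iff₀ ht] at hnT
  rw [div_le_iff₀ hs] at hes
  rw [div_le_iff₀ ht] at het
  have ha : 0 < a - μ := sub_smallerEigenvalue_pos_left hc
  have hb : 0 < b - μ := sub_smallerEigenvalue_pos_right hc
  have hp : (a - μ) * s < nS - μ * s := by linarith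
  have hr : (b - μ) * t ≤ nT - μ * t := by linarith
  have hp₀ : 0 < nS - μ * s := (mul_pos ha hs).trans hp
  have hdisc : e ^ 2 < (nS - μ * s) * (nT - μ * t) :=
    calc e ^ 2 ≤ c ^ 2 * (s * t) := by nlinarith
      _ = (a - μ) * s * ((b - μ) * t) := by
        rw [← sub_smallerEigenvalue_mul_sub_smallerEigenvalue (a := a) (b := b)]; ring
      _ < (nS - μ * s) * (nT - μ * t) := mul_lt_mul hp hr (by positivity) hp₀.le
  have := quadratic_form_pos hp₀ hdisc hxy
  linarith

theorem exists_dotProduct_smul_add_smul_eq_zero {n K : Type*} [Fintype n] [Field K]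
    (z u v : n → K) : ∃ α β : K, (α ≠ 0 ∨ β ≠ 0) ∧ z ⬝ᵥ (α • u + β • v) = 0 := by
  by_cases hu : z ⬝ᵥ u = 0
  · exact ⟨1, 0, by simp, by simp [hu]⟩
  · refine ⟨z ⬝ᵥ v, -(z ⬝ᵥ u), .inr (neg_ne_zero.mpr hu), ?_⟩
    simp only [dotProduct_add, dotProduct_smul, smul_eq_mul]
    ring

theorem two_le_card_of_disjoint {V : Type*} [Fintype V] {S T : Finset V} (hS : S.Nonempty)
    (hT : T.Nonempty) (hST : Disjoint S T) : 2 ≤ Fintype.card V := by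
  classical
  have := card_le_univ (S ∪ T)
  rw [card_union_of_disjoint hST] at this
  have := hS.card_pos
  have := hT.card_pos
  omega

theorem lambda2_lower_bound_of_partition_general {V : Type*} [Fintype V] (G : SimpleGraph V)
    (S T : Finset V) (hS : S.Nonempty) (hT : T.Nonempty) (hST : Disjoint S T)
    (a b c : ℝ) (hc : 0 < c)
    (h1 : a < (crossPairs G ↑S ↑S : ℝ) / S.card)
    (h2 : b ≤ (crossPairs G ↑T ↑T : ℝ) / T.card)
    (h3 : (crossPairs G ↑S ↑T : ℝ) / S.card ≤ c)
    (h4 : (crossPairs G ↑S ↑T : ℝ) / T.card ≤ c) :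
    (a + b - Real.sqrt ((a - b) ^ 2 + 4 * c ^ 2)) / 2 < lambda2 G := by
  classical
  have hs : (0 : ℝ) < #S := mod_cast hS.card_pos
  have ht : (0 : ℝ) < #T := mod_cast hT.card_pos
  obtain ⟨i₀, hi₀⟩ := exists_forall_ne_eigenvalues_le_lambda2 G (two_le_card_of_disjoint hS hT hST)
  set u : V → ℝ := (S : Set V).indicator 1
  set v : V → ℝ := (T : Set V).indicator 1
  obtain ⟨α, β, hαβ, horth⟩ :=
    exists_dotProduct_smul_add_smul_eq_zero ((adjMatrix_isHermitian G).eigenvectorBasis i₀) u v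
  have hupper := (adjMatrix_isHermitian G).dotProduct_mulVec_le_of_dotProduct_eq_zero hi₀ horth
  rw [(G.isSymm_adjMatrix (α := ℝ)).dotProduct_mulVec_smul_add_smul,
    dotProduct_smul_add_smul_self] at hupper
  simp only [u, v, indicator_one_dotProduct_adjMatrix_mulVec,
    Finset.indicator_one_dotProduct, inter_self, disjoint_iff_inter_eq_empty.mp hST,
    card_empty] at hupper
  have hlower := smallerEigenvalue_mul_lt hc hs ht h1 h2 (Nat.cast_nonneg _) h3 h4 hαβ
  have hnorm : 0 < α ^ 2 * #S + β ^ 2 * #T := by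
    rcases hαβ with h | h <;> positivity
  refine lt_of_mul_lt_mul_right (hlower.trans_le (hupper.trans_eq ?_)) hnorm.le
  ring

/-- **Lemma (quotient-matrix eigenvalue bound).**
Let `F` be the subgraph of `G` induced on the union of nonempty disjoint vertex sets `S` and `T`.
(Since `F` is induced, edge counts inside `S`, inside `T`, and between `S` and `T` are the same
in `F` and in `G`; here `crossPairs G ↑S ↑S = 2·e(F[S])`, `crossPairs G ↑T ↑T = 2·e(F[T])` and
`crossPairs G ↑S ↑T = e_F(S,T)`.)
If `2·e(F[S])/|S| > a`, `2·e(F[T])/|T| ≥ b`, `e_F(S,T)/|S| ≤ c` and `e_F(S,T)/|T| ≤ c`, where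
`a, b ≥ 0` and `c > 0`, then `λ₂(G) > (a + b - √((a - b)² + 4c²))/2`. -/
theorem lambda2_lower_bound_of_partition {V : Type*} [Fintype V] (G : SimpleGraph V)
    (S T : Finset V) (hS : S.Nonempty) (hT : T.Nonempty) (hST : Disjoint S T)
    (a b c : ℝ) (ha : 0 ≤ a) (hb : 0 ≤ b) (hc : 0 < c)
    (h1 : a < (crossPairs G ↑S ↑S : ℝ) / S.card)
    (h2 : b ≤ (crossPairs G ↑T ↑T : ℝ) / T.card)
    (h3 : (crossPairs G ↑S ↑T : ℝ) / S.card ≤ c)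
    (h4 : (crossPairs G ↑S ↑T : ℝ) / T.card ≤ c) :
    (a + b - Real.sqrt ((a - b) ^ 2 + 4 * c ^ 2)) / 2 < lambda2 G :=
  lambda2_lower_bound_of_partition_general G S T hS hT hST a b c hc h1 h2 h3 h4
end

section
/- For every integer d ≥ 3, the graph G_d is a connected non-bipartite d-regular graph on 3d − 1 vertices, and its toughness satisfies t(G_d) ≤ 1. -/
/-- The graph `G_d`: the disjoint union of an empty graph on `d` vertices (the `.inl` part),
an empty graph on `d-1` vertices (the `.inr (.inl _)` part) and a complete graph `K_d`
(the `.inr (.inr _)` part), where every vertex of the first part is joined to every vertex of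
the second part, and a perfect matching is added between the first and third parts. -/
def Gd (d : ℕ) : SimpleGraph (Fin d ⊕ (Fin (d - 1) ⊕ Fin d)) where
  Adj x y :=
    match x, y with
    | .inl _, .inr (.inl _) => True
    | .inr (.inl _), .inl _ => True
    | .inl a, .inr (.inr c) => (a : ℕ) = (c : ℕ)
    | .inr (.inr c), .inl a => (a : ℕ) = (c : ℕ)
    | .inr (.inr c), .inr (.inr c') => c ≠ c'
    | _, _ => False
  symm := by
    constructor
    rintro (a | b | c) (a' | b' | c') h <;> simp_all
    exact fun e => h e.symm
  loopless := by
    constructor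
    rintro (a | b | c) h <;> simp_all

open SimpleGraph

lemma SimpleGraph.Reachable.eq_of_forall_not_adj {V : Type*} {G : SimpleGraph V} {v w : V}
    (hv : ∀ x, ¬ G.Adj v x) (h : G.Reachable v w) : v = w := by
  obtain ⟨_ | ⟨hadj, _⟩⟩ := h
  · rfl
  · exact absurd hadj (hv _)

section neighborFinset

variable {d : ℕ} [DecidableRel (Gd d).Adj]

lemma Gd_neighborFinset_inl (a : Fin d) :
    (Gd d).neighborFinset (.inl a) = (∅ : Finset (Fin d)).disjSum (Finset.univ.disjSum {a}) := by
  ext (a' | b | c) <;> simp only [mem_neighborFinset] <;> simp [Gd, Fin.val_eq_val, eq_comm]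

lemma Gd_neighborFinset_inr_inl (b : Fin (d - 1)) :
    (Gd d).neighborFinset (.inr (.inl b)) = (.univ : Finset (Fin d)).disjSum ∅ := by
  ext (a | b' | c) <;> simp only [mem_neighborFinset] <;> simp [Gd]

lemma Gd_neighborFinset_inr_inr (c : Fin d) :
    (Gd d).neighborFinset (.inr (.inr c)) =
      ({c} : Finset (Fin d)).disjSum ((∅ : Finset (Fin (d - 1))).disjSum (Finset.univ.erase c)) := by
  ext (a | b | c') <;> simp only [mem_neighborFinset] <;> simp [Gd, Fin.val_eq_val, ne_comm]

end neighborFinset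

lemma Gd_isRegularOfDegree (d : ℕ) [DecidableRel (Gd d).Adj] : (Gd d).IsRegularOfDegree d := by
  rintro (a | b | c) <;>
    simp only [← card_neighborFinset_eq_degree, Gd_neighborFinset_inl, Gd_neighborFinset_inr_inl,
      Gd_neighborFinset_inr_inr, Finset.card_disjSum, Finset.card_erase_of_mem, Finset.mem_univ,
      Finset.card_univ, Fintype.card_fin, Finset.card_empty, Finset.card_singleton, zero_add,
      add_zero]
  · exact Nat.sub_add_cancel a.pos
  · exact Nat.add_sub_cancel' c.pos

lemma Gd_connected {d : ℕ} (hd : 2 ≤ d) : (Gd d).Connected := by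
  let hub : Fin d ⊕ (Fin (d - 1) ⊕ Fin d) := .inr (.inl ⟨0, by omega⟩)
  have reachable_inl (a : Fin d) : (Gd d).Reachable hub (.inl a) := Adj.reachable trivial
  refine (Gd d).connected_iff_exists_forall_reachable.2 ⟨hub, ?_⟩
  rintro (a | b | c)
  · exact reachable_inl a
  · exact (reachable_inl ⟨0, by omega⟩).trans (Adj.reachable trivial)
  · exact (reachable_inl c).trans (Adj.reachable rfl)

lemma Gd_not_colorable {d k : ℕ} (hk : k < d) : ¬ (Gd d).Colorable k := fun hc => by
  have := hc.card_le_of_pairwise_adj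
    (fun c : Fin d => (.inr (.inr c) : Fin d ⊕ (Fin (d - 1) ⊕ Fin d))) fun _ _ hne => hne
  simp only [Nat.card_eq_fintype_card, Fintype.card_fin] at this
  omega

lemma Gd_induce_compl_range_inl_not_adj {d : ℕ} (b : Fin (d - 1)) (hb) (y) :
    ¬ ((Gd d).induce (Set.range Sum.inl)ᶜ).Adj ⟨.inr (.inl b), hb⟩ y := by
  obtain ⟨a | b' | c, hy⟩ := y <;> simp [Gd] at hy ⊢

lemma le_card_connectedComponent_Gd_induce_compl_range_inl {d : ℕ} (hd : 0 < d) :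
    d ≤ Nat.card ((Gd d).induce (Set.range Sum.inl)ᶜ).ConnectedComponent := by
  set H := (Gd d).induce (Set.range (Sum.inl : Fin d → _))ᶜ
  let comp : Option (Fin (d - 1)) → H.ConnectedComponent
    | none => H.connectedComponentMk ⟨.inr (.inr ⟨0, hd⟩), by simp⟩
    | some b => H.connectedComponentMk ⟨.inr (.inl b), by simp⟩
  have hcomp : Function.Injective comp := by
    rintro (_ | b) (_ | b') h
    · rfl
    · simpa using (ConnectedComponent.eq.mp h).symm.eq_of_forall_not_adj
        (Gd_induce_compl_range_inl_not_adj b' _)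
    all_goals
      simpa using (ConnectedComponent.eq.mp h).eq_of_forall_not_adj
        (Gd_induce_compl_range_inl_not_adj b _)
  calc d = Nat.card (Option (Fin (d - 1))) := by simp; omega
    _ ≤ _ := Nat.card_le_card_of_injective comp hcomp

open Classical in
/-- **Properties of `G_d`.** For every integer `d ≥ 3`, the graph `G_d` is a connected,
non-bipartite (i.e. not 2-colorable), `d`-regular graph on `3d - 1` vertices, and its toughness
is at most `1`: there is a proper vertex subset `S` with `c(G_d - S) ≥ 2` and
`|S| / c(G_d - S) ≤ 1`, i.e. `|S| ≤ c(G_d - S)`. -/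
theorem Gd_properties (d : ℕ) (hd : 3 ≤ d) :
    (Gd d).Connected ∧ ¬ (Gd d).Colorable 2 ∧ (Gd d).IsRegularOfDegree d ∧
      Fintype.card (Fin d ⊕ (Fin (d - 1) ⊕ Fin d)) = 3 * d - 1 ∧
      ∃ S : Finset (Fin d ⊕ (Fin (d - 1) ⊕ Fin d)),
        (↑S : Set (Fin d ⊕ (Fin (d - 1) ⊕ Fin d))) ≠ Set.univ ∧
        2 ≤ Nat.card ((Gd d).induce (↑S : Set (Fin d ⊕ (Fin (d - 1) ⊕ Fin d)))ᶜ).ConnectedComponent ∧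
        S.card ≤ Nat.card ((Gd d).induce (↑S : Set (Fin d ⊕ (Fin (d - 1) ⊕ Fin d)))ᶜ).ConnectedComponent := by
  refine ⟨Gd_connected (by omega), Gd_not_colorable (by omega), Gd_isRegularOfDegree d,
    by simp only [Fintype.card_sum, Fintype.card_fin]; omega, ?_⟩
  -- Deleting the first part leaves `d - 1` isolated vertices and a copy of `K_d`.
  have hS : ((Finset.univ.map Function.Embedding.inl : Finset (Fin d ⊕ (Fin (d - 1) ⊕ Fin d))) :
      Set (Fin d ⊕ (Fin (d - 1) ⊕ Fin d))) = Set.range Sum.inl := by simp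
  have hcomp := le_card_connectedComponent_Gd_induce_compl_range_inl (d := d) (by omega)
  refine ⟨Finset.univ.map Function.Embedding.inl, ?_, ?_, ?_⟩ <;> rw [hS]
  · exact Set.ne_univ_iff_exists_notMem _ |>.2 ⟨.inr (.inr ⟨0, by omega⟩), by simp⟩
  · omega
  · simpa using hcomp
end

section
/- Let G be a connected d-regular graph with d ≥ 3. If there exists a proper subset S of V(G) such that G − S has at least 2 connected components and the number of connected components of G − S is strictly greater than |S|, then λ₂(G) > d − 1. -/
/-!
The constant vector is an eigenvector of eigenvalue `d`, so by Courant–Fischer it suffices to find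
a vector `x ⊥ 𝟙` with Rayleigh quotient above `d - 1`. If a component `C` of `G - S` sends `e(C)`
edges to `S`, its indicator `𝟙_C` has Rayleigh quotient `d - e(C) / |C|`, which exceeds `d - 1`
exactly when `e(C) < |C|`; for two such components `C`, `D`, the vector `|D| 𝟙_C - |C| 𝟙_D` works.
Two such components exist by counting: connectivity gives `e(C) ≥ 1`, a component with
`e(C) ≥ |C|` has `e(C) ≥ d` because `d |C| ≤ |C| (|C| - 1) + e(C)`, and `∑ e(C) ≤ d |S|` while
there are more than `|S|` components.
-/

open Finset Matrix

theorem Multiset.lt_getD_sort_card_sub_two {α : Type*} [LinearOrder α] {M : Multiset α} {t : α}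
    (a : α) (h : 2 ≤ (M.filter (t < ·)).card) :
    t < (M.sort (· ≤ ·)).getD (card M - 2) a := by
  set L := M.sort (· ≤ ·)
  set F := L.filter (t < ·)
  have hF : F.length = (M.filter (t < ·)).card := by
    rw [← M.sort_eq (· ≤ ·), Multiset.filter_coe, Multiset.coe_card]
  have hL : L.length = card M := M.length_sort _
  have hsub : F.Sublist L := List.filter_sublist
  -- The second-to-last entry of `F` sits at a position `≤ |M| - 2` of the sorted list `L`.
  obtain ⟨f, hf⟩ := List.sublist_iff_exists_fin_orderEmbedding_get_eq.mp hsub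
  let i : Fin F.length := ⟨F.length - 2, by omega⟩
  have hi : (f i : ℕ) ≤ card M - 2 := by
    have hlt : f i < f ⟨F.length - 1, by omega⟩ :=
      f.lt_iff_lt.mpr (by simp [i, Fin.lt_def]; omega)
    have := (f ⟨F.length - 1, by omega⟩).isLt
    rw [Fin.lt_def] at hlt
    omega
  have hFi : t < F.get i := by
    simpa using List.of_mem_filter (List.get_mem F i)
  rw [List.getD_eq_getElem _ _ (by omega)]
  refine hFi.trans_le ?_
  rw [hf]
  exact (M.pairwise_sort (· ≤ ·)).sortedLE.getElem_le_getElem_of_le hi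

theorem Finset.one_lt_card_filter_of_sum_le {ι : Type*} {s : Finset ι} {e : ι → ℕ}
    {P : ι → Prop} [DecidablePred P] {d m : ℕ} (hpos : ∀ i ∈ s, 1 ≤ e i)
    (hbad : ∀ i ∈ s, ¬P i → d ≤ e i) (hsum : ∑ i ∈ s, e i ≤ d * m) (hcard : m < #s) :
    1 < #{i ∈ s | P i} := by
  by_contra! hgood
  have hgood_sum : #{i ∈ s | P i} ≤ ∑ i ∈ s with P i, e i := by
    simpa using card_nsmul_le_sum _ _ 1 fun i hi => hpos i (mem_filter.mp hi).1
  have hbad_sum : #{i ∈ s | ¬P i} ≤ ∑ i ∈ s with ¬P i, e i := by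
    simpa using card_nsmul_le_sum _ _ 1 fun i hi => hpos i (mem_filter.mp hi).1
  have hbad_sum_mul : #{i ∈ s | ¬P i} * d ≤ ∑ i ∈ s with ¬P i, e i := by
    simpa using card_nsmul_le_sum _ _ d fun i hi =>
      hbad i (mem_filter.mp hi).1 (mem_filter.mp hi).2
  rw [← sum_filter_add_sum_filter_not s P] at hsum
  have := card_filter_add_card_filter_not (s := s) P
  interval_cases h : #{i ∈ s | P i} <;> nlinarith

namespace Matrix.IsHermitian

variable {n : Type*} [Fintype n] {A : Matrix n n ℝ}

lemma dotProduct_mulVec_comm (hA : A.IsHermitian) (x y : n → ℝ) :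
    x ⬝ᵥ (A *ᵥ y) = y ⬝ᵥ (A *ᵥ x) := by
  rw [dotProduct_mulVec, ← mulVec_transpose, (isHermitian_iff_isSymm.mp hA).eq, dotProduct_comm]

variable [DecidableEq n]

lemma eigenvectorBasis_dotProduct_mulVec (hA : A.IsHermitian) (i : n) (x : n → ℝ) :
    ⇑(hA.eigenvectorBasis i) ⬝ᵥ (A *ᵥ x) =
      hA.eigenvalues i * (⇑(hA.eigenvectorBasis i) ⬝ᵥ x) := by
  rw [hA.dotProduct_mulVec_comm, mulVec_eigenvectorBasis, dotProduct_smul, smul_eq_mul,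
    dotProduct_comm]

lemma sum_eigenvectorBasis_dotProduct_mul (hA : A.IsHermitian) (x y : n → ℝ) :
    ∑ i, (⇑(hA.eigenvectorBasis i) ⬝ᵥ x) * (⇑(hA.eigenvectorBasis i) ⬝ᵥ y) = x ⬝ᵥ y := by
  have := hA.eigenvectorBasis.sum_inner_mul_inner (WithLp.toLp 2 x) (WithLp.toLp 2 y)
  simp only [EuclideanSpace.inner_eq_star_dotProduct, star_trivial] at this
  simpa [dotProduct_comm] using this

lemma dotProduct_mulVec_eq_sum (hA : A.IsHermitian) (x : n → ℝ) :
    x ⬝ᵥ (A *ᵥ x) = ∑ i, hA.eigenvalues i * (⇑(hA.eigenvectorBasis i) ⬝ᵥ x) ^ 2 := by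
  rw [← hA.sum_eigenvectorBasis_dotProduct_mul]
  refine sum_congr rfl fun i _ => ?_
  rw [eigenvectorBasis_dotProduct_mulVec]; ring

theorem finrank_le_card_eigenvalues_gt (hA : A.IsHermitian) {t : ℝ} (W : Submodule ℝ (n → ℝ))
    (hW : ∀ x ∈ W, x ≠ 0 → t * (x ⬝ᵥ x) < x ⬝ᵥ (A *ᵥ x)) :
    Module.finrank ℝ W ≤ #{i | t < hA.eigenvalues i} := by
  let coords : Matrix {i // t < hA.eigenvalues i} n ℝ := of fun i => hA.eigenvectorBasis i
  -- A vector with no component along eigenvalues above `t` has Rayleigh quotient at most `t`.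
  have hinj : Function.Injective (coords.mulVecLin ∘ₗ W.subtype) := by
    rw [← LinearMap.ker_eq_bot, LinearMap.ker_eq_bot']
    rintro ⟨x, hx⟩ hcx
    by_contra hne
    refine (hW x hx (by simpa using hne)).not_ge ?_
    rw [hA.dotProduct_mulVec_eq_sum, ← hA.sum_eigenvectorBasis_dotProduct_mul, mul_sum]
    refine sum_le_sum fun i _ => ?_
    by_cases hi : t < hA.eigenvalues i
    · have : ⇑(hA.eigenvectorBasis i) ⬝ᵥ x = 0 := congr_fun hcx ⟨i, hi⟩
      simp [this]
    · rw [← sq]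
      exact mul_le_mul_of_nonneg_right (not_lt.mp hi) (sq_nonneg _)
  simpa [Fintype.card_subtype] using LinearMap.finrank_le_finrank_of_injective hinj

theorem two_le_card_eigenvalues_gt (hA : A.IsHermitian) {t μ : ℝ} {u x : n → ℝ} (hu : u ≠ 0)
    (hAu : A *ᵥ u = μ • u) (hμ : t < μ) (hux : u ⬝ᵥ x = 0)
    (hx : t * (x ⬝ᵥ x) < x ⬝ᵥ (A *ᵥ x)) :
    2 ≤ #{i | t < hA.eigenvalues i} := by
  -- The cross terms vanish because `u` is an eigenvector orthogonal to `x`.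
  have excess (a b : ℝ) :
      (a • u + b • x) ⬝ᵥ (A *ᵥ (a • u + b • x)) - t * ((a • u + b • x) ⬝ᵥ (a • u + b • x)) =
        a ^ 2 * ((μ - t) * (u ⬝ᵥ u)) + b ^ 2 * (x ⬝ᵥ (A *ᵥ x) - t * (x ⬝ᵥ x)) := by
    simp only [mulVec_add, mulVec_smul, add_dotProduct, dotProduct_add, smul_dotProduct,
      dotProduct_smul, hA.dotProduct_mulVec_comm u x, hAu, dotProduct_comm x u, hux,
      smul_eq_mul]
    ring
  have hpos (a b : ℝ) (hab : a ≠ 0 ∨ b ≠ 0) :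
      0 < a ^ 2 * ((μ - t) * (u ⬝ᵥ u)) + b ^ 2 * (x ⬝ᵥ (A *ᵥ x) - t * (x ⬝ᵥ x)) := by
    have huu : 0 < (μ - t) * (u ⬝ᵥ u) :=
      mul_pos (sub_pos.mpr hμ) (dotProduct_self_star_pos_iff.mpr hu)
    have hxx : 0 < x ⬝ᵥ (A *ᵥ x) - t * (x ⬝ᵥ x) := sub_pos.mpr hx
    rcases hab with ha | hb <;> positivity
  have hind : LinearIndependent ℝ ![u, x] := by
    refine LinearIndependent.pair_iff.mpr fun a b hab => ?_
    by_contra h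
    have := excess a b
    simp only [hab, mulVec_zero, zero_dotProduct, mul_zero, sub_zero] at this
    exact (hpos a b (by tauto)).ne this
  rw [← Fintype.card_fin 2, ← finrank_span_eq_card hind]
  refine hA.finrank_le_card_eigenvalues_gt _ fun y hy hy0 => ?_
  obtain ⟨c, rfl⟩ := (Submodule.mem_span_range_iff_exists_fun ℝ).mp hy
  simp only [Fin.sum_univ_two, Matrix.cons_val_zero, Matrix.cons_val_one] at hy0 ⊢
  have hc : c 0 ≠ 0 ∨ c 1 ≠ 0 := by
    by_contra! h
    simp [h] at hy0
  exact sub_pos.mp ((excess _ _).symm ▸ hpos _ _ hc)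

end Matrix.IsHermitian

theorem lt_lambda2_of_two_le_card {V : Type*} [Fintype V] [DecidableEq V] (G : SimpleGraph V)
    [DecidableRel G.Adj] {t : ℝ} (h : 2 ≤ #{i | t < (adjMatrix_isHermitian G).eigenvalues i}) :
    t < lambda2 G := by
  -- `adjEigenvalues` is built from the classical decidability instances.
  have hM : adjEigenvalues G = univ.val.map (adjMatrix_isHermitian G).eigenvalues := by
    unfold adjEigenvalues
    congr!
  have := Multiset.lt_getD_sort_card_sub_two (M := adjEigenvalues G) (t := t) 0 (by
    rw [hM, Multiset.filter_map, Multiset.card_map]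
    exact h)
  simpa [lambda2, hM] using this

namespace SimpleGraph

variable {V : Type*}

section Interedges

variable {G : SimpleGraph V} [DecidableRel G.Adj]

lemma card_interedges_comm (X Y : Finset V) : #(G.interedges X Y) = #(G.interedges Y X) :=
  have : Std.Symm G.Adj := G.symm
  Rel.card_interedges_comm X Y

lemma card_interedges_eq_sum (X Y : Finset V) :
    #(G.interedges X Y) = ∑ u ∈ X, #{v ∈ Y | G.Adj u v} := by
  rw [interedges_def, card_filter, sum_product]
  simp only [card_filter]

lemma card_interedges_self_add_card_le (X : Finset V) : #(G.interedges X X) + #X ≤ #X * #X := by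
  have hsub : G.interedges X X ⊆ X.offDiag := fun e he => by
    obtain ⟨hu, hv, hadj⟩ := (G.mem_interedges_iff).mp he
    exact mem_offDiag.mpr ⟨hu, hv, hadj.ne⟩
  have := card_le_card hsub
  rw [offDiag_card] at this
  have := Nat.le_mul_self #X
  omega

variable [Fintype V] {d : ℕ}

lemma IsRegularOfDegree.card_interedges_univ (hreg : G.IsRegularOfDegree d) (X : Finset V) :
    #(G.interedges X univ) = d * #X := by
  simp [card_interedges_eq_sum, ← neighborFinset_eq_filter, hreg _, mul_comm]

theorem IsRegularOfDegree.lt_lambda2 (hreg : G.IsRegularOfDegree d) {t : ℝ} (ht : t < d)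
    {x : V → ℝ} (hx0 : ∑ v, x v = 0) (hx : t * (x ⬝ᵥ x) < x ⬝ᵥ (G.adjMatrix ℝ *ᵥ x)) :
    t < lambda2 G := by
  classical
  obtain ⟨v⟩ : Nonempty V := by
    by_contra! hV
    simp [dotProduct] at hx
  refine lt_lambda2_of_two_le_card G <| (adjMatrix_isHermitian G).two_le_card_eigenvalues_gt
    (u := Function.const V 1) (fun h => by simpa using congr_fun h v) ?_ ht ?_ hx
  · ext w
    simp [hreg w]
  · simpa [dotProduct] using hx0

variable [DecidableEq V]

lemma indicator_dotProduct_indicator (X Y : Finset V) :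
    (X : Set V).indicator (1 : V → ℝ) ⬝ᵥ (Y : Set V).indicator 1 = #(X ∩ Y) := by
  simp [dotProduct, Set.indicator_apply, ← ite_and, filter_and, inter_comm]

lemma indicator_dotProduct_adjMatrix_mulVec_indicator (X Y : Finset V) :
    (X : Set V).indicator 1 ⬝ᵥ (G.adjMatrix ℝ *ᵥ (Y : Set V).indicator 1) =
      #(G.interedges X Y) := by
  simp [dotProduct, mulVec, Set.indicator_apply, adjMatrix_apply, card_interedges_eq_sum]

lemma exists_sum_eq_zero_and_lt_rayleigh {C D : Finset V} (hCD : Disjoint C D)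
    (hadj : ∀ u ∈ C, ∀ v ∈ D, ¬G.Adj u v) {t : ℝ}
    (hC : t * #C < #(G.interedges C C)) (hD : t * #D < #(G.interedges D D)) :
    ∃ x : V → ℝ, ∑ v, x v = 0 ∧ t * (x ⬝ᵥ x) < x ⬝ᵥ (G.adjMatrix ℝ *ᵥ x) := by
  have hCD' : G.interedges C D = ∅ := by
    ext ⟨u, v⟩
    simpa [mem_interedges_iff] using fun hu => hadj u hu v
  have hDC : G.interedges D C = ∅ := by
    ext ⟨u, v⟩
    simpa [mem_interedges_iff, G.adj_comm u] using fun hu hv => hadj v hv u hu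
  have hcard_pos {X : Finset V} (hX : t * #X < #(G.interedges X X)) : 0 < (#X : ℝ) := by
    rcases X.eq_empty_or_nonempty with rfl | hne
    · simp at hX
    · exact_mod_cast hne.card_pos
  have hC0 := hcard_pos hC
  have hD0 := hcard_pos hD
  refine ⟨(#D : ℝ) • (C : Set V).indicator 1 - (#C : ℝ) • (D : Set V).indicator 1, ?_, ?_⟩
  · simp [Finset.sum_sub_distrib, Set.indicator_apply, mul_comm]
  · simp only [mulVec_sub, mulVec_smul, sub_dotProduct, dotProduct_sub, smul_dotProduct,
      dotProduct_smul, indicator_dotProduct_adjMatrix_mulVec_indicator, hCD', hDC]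
    simp only [indicator_dotProduct_indicator, disjoint_iff_inter_eq_empty.mp hCD,
      inter_comm D C, inter_self, card_empty, CharP.cast_eq_zero, smul_eq_mul]
    nlinarith [mul_lt_mul_of_pos_left hC (pow_pos hD0 2),
      mul_lt_mul_of_pos_left hD (pow_pos hC0 2)]

end Interedges

section Components

variable [Fintype V] {G : SimpleGraph V} {s : Set V}

open Classical in
noncomputable def ConnectedComponent.verts (c : (G.induce s).ConnectedComponent) : Finset V :=
  {v | ∃ h : v ∈ s, (G.induce s).connectedComponentMk ⟨v, h⟩ = c}

namespace ConnectedComponent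

variable {c c' : (G.induce s).ConnectedComponent} {u v : V}

@[simp]
lemma mem_verts : v ∈ c.verts ↔ ∃ h : v ∈ s, (G.induce s).connectedComponentMk ⟨v, h⟩ = c := by
  simp [verts]

lemma mem_of_mem_verts (hv : v ∈ c.verts) : v ∈ s := (mem_verts.mp hv).1

lemma verts_nonempty (c : (G.induce s).ConnectedComponent) : c.verts.Nonempty := by
  induction c using ConnectedComponent.ind with
  | h w => exact ⟨w, mem_verts.mpr ⟨w.2, rfl⟩⟩

lemma mem_verts_of_adj (hu : u ∈ c.verts) (hv : v ∈ s) (hadj : G.Adj u v) : v ∈ c.verts := by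
  obtain ⟨hus, rfl⟩ := mem_verts.mp hu
  have hadj' : (G.induce s).Adj ⟨u, hus⟩ ⟨v, hv⟩ := hadj
  exact mem_verts.mpr ⟨hv, (connectedComponentMk_eq_of_adj hadj').symm⟩

lemma disjoint_verts (h : c ≠ c') : Disjoint c.verts c'.verts := by
  refine Finset.disjoint_left.mpr fun v hv hv' => h ?_
  obtain ⟨_, rfl⟩ := mem_verts.mp hv
  obtain ⟨_, rfl⟩ := mem_verts.mp hv'
  rfl

lemma not_adj_of_ne (h : c ≠ c') (hu : u ∈ c.verts) (hv : v ∈ c'.verts) : ¬G.Adj u v :=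
  fun hadj =>
    Finset.disjoint_left.mp (disjoint_verts h) (mem_verts_of_adj hu (mem_of_mem_verts hv) hadj) hv

lemma exists_adj_not_mem (hconn : G.Connected) (h : c ≠ c') :
    ∃ u ∈ c.verts, ∃ v ∉ s, G.Adj u v := by
  obtain ⟨u, hu⟩ := c.verts_nonempty
  obtain ⟨v, hv⟩ := c'.verts_nonempty
  obtain ⟨d, -, hd, hd'⟩ := (hconn.preconnected u v).some.exists_boundary_dart (c.verts : Set V)
    hu (Finset.disjoint_left.mp (disjoint_verts h).symm hv)
  exact ⟨d.fst, hd, d.snd, fun hs => hd' (mem_verts_of_adj hd hs d.adj), d.adj⟩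

lemma disjoint_verts_of_compl {S : Finset V} (c : (G.induce (S : Set V)ᶜ).ConnectedComponent) :
    Disjoint c.verts S :=
  Finset.disjoint_left.mpr fun _ hv => by simpa using mem_of_mem_verts hv

end ConnectedComponent

end Components

section Separator

variable [Fintype V] [DecidableEq V] {G : SimpleGraph V} [DecidableRel G.Adj] {S : Finset V}
  {d : ℕ}

lemma ConnectedComponent.interedges_verts_univ
    (c : (G.induce (S : Set V)ᶜ).ConnectedComponent) :
    G.interedges c.verts univ = G.interedges c.verts c.verts ∪ G.interedges c.verts S := by
  ext ⟨u, v⟩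
  simp only [mem_interedges_iff, mem_univ, true_and, mem_union]
  constructor
  · rintro ⟨hu, hadj⟩
    by_cases hv : v ∈ S
    · exact Or.inr ⟨hu, hv, hadj⟩
    · exact Or.inl ⟨hu, mem_verts_of_adj hu (by simpa using hv) hadj, hadj⟩
  · rintro (⟨hu, -, hadj⟩ | ⟨hu, -, hadj⟩) <;> exact ⟨hu, hadj⟩

lemma IsRegularOfDegree.card_interedges_verts_add (hreg : G.IsRegularOfDegree d)
    (c : (G.induce (S : Set V)ᶜ).ConnectedComponent) :
    #(G.interedges c.verts c.verts) + #(G.interedges c.verts S) = d * #c.verts := by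
  rw [← hreg.card_interedges_univ, c.interedges_verts_univ, card_union_of_disjoint]
  exact interedges_disjoint_right _ _ c.disjoint_verts_of_compl

lemma IsRegularOfDegree.card_interedges_verts_lt_or_le (hreg : G.IsRegularOfDegree d)
    (c : (G.induce (S : Set V)ᶜ).ConnectedComponent) :
    #(G.interedges c.verts S) < #c.verts ∨ d ≤ #(G.interedges c.verts S) := by
  have hdeg := hreg.card_interedges_verts_add c
  have hself := G.card_interedges_self_add_card_le c.verts
  have hn : 1 ≤ #c.verts := c.verts_nonempty.card_pos
  refine or_iff_not_imp_left.mpr fun he => ?_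
  -- If `|C| ≤ d`, then `e ≥ d |C| - |C| (|C| - 1) = d + (|C| - 1) (d - |C|) ≥ d`.
  rcases le_or_gt d #c.verts with h | h
  · omega
  · nlinarith

lemma ConnectedComponent.one_le_card_interedges_verts (hconn : G.Connected)
    {c c' : (G.induce (S : Set V)ᶜ).ConnectedComponent} (h : c ≠ c') :
    1 ≤ #(G.interedges c.verts S) := by
  obtain ⟨u, hu, v, hv, hadj⟩ := exists_adj_not_mem hconn h
  exact card_pos.mpr ⟨(u, v), (G.mem_interedges_iff).mpr ⟨hu, by simpa using hv, hadj⟩⟩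

lemma IsRegularOfDegree.sum_card_interedges_verts_le (hreg : G.IsRegularOfDegree d)
    [Fintype (G.induce (S : Set V)ᶜ).ConnectedComponent] :
    ∑ c : (G.induce (S : Set V)ᶜ).ConnectedComponent, #(G.interedges c.verts S) ≤ d * #S := by
  rw [← card_biUnion, ← interedges_biUnion_left]
  · calc
      _ ≤ #(G.interedges univ S) := card_le_card (G.interedges_mono (subset_univ _) subset_rfl)
      _ = d * #S := by rw [card_interedges_comm, hreg.card_interedges_univ]
  · exact fun c _ c' _ h => interedges_disjoint_left _ (ConnectedComponent.disjoint_verts h) _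

theorem IsRegularOfDegree.exists_ne_card_interedges_verts_lt (hreg : G.IsRegularOfDegree d)
    (hconn : G.Connected) (h2 : 2 ≤ Nat.card (G.induce (S : Set V)ᶜ).ConnectedComponent)
    (hgt : #S < Nat.card (G.induce (S : Set V)ᶜ).ConnectedComponent) :
    ∃ c₁ c₂ : (G.induce (S : Set V)ᶜ).ConnectedComponent, c₁ ≠ c₂ ∧
      #(G.interedges c₁.verts S) < #c₁.verts ∧ #(G.interedges c₂.verts S) < #c₂.verts := by
  have : Fintype (G.induce (S : Set V)ᶜ).ConnectedComponent := Fintype.ofFinite _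
  rw [Nat.card_eq_fintype_card] at h2 hgt
  have : Nontrivial (G.induce (S : Set V)ᶜ).ConnectedComponent :=
    Fintype.one_lt_card_iff_nontrivial.mp h2
  have hgood := one_lt_card_filter_of_sum_le (s := univ)
    (P := fun c => #(G.interedges c.verts S) < #c.verts)
    (fun c _ =>
      ConnectedComponent.one_le_card_interedges_verts hconn (exists_ne c).choose_spec.symm)
    (fun c _ => (hreg.card_interedges_verts_lt_or_le c).resolve_left)
    hreg.sum_card_interedges_verts_le hgt
  obtain ⟨c₁, h₁, c₂, h₂, hne⟩ := one_lt_card.mp hgood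
  exact ⟨c₁, c₂, hne, (mem_filter.mp h₁).2, (mem_filter.mp h₂).2⟩

lemma IsRegularOfDegree.sub_one_mul_card_verts_lt (hreg : G.IsRegularOfDegree d)
    {c : (G.induce (S : Set V)ᶜ).ConnectedComponent} (hc : #(G.interedges c.verts S) < #c.verts) :
    ((d : ℝ) - 1) * #c.verts < #(G.interedges c.verts c.verts) := by
  have hdeg : ((#(G.interedges c.verts c.verts) + #(G.interedges c.verts S) : ℕ) : ℝ) =
      (d * #c.verts : ℕ) := congrArg _ (hreg.card_interedges_verts_add c)
  have hc' : (#(G.interedges c.verts S) : ℝ) < #c.verts := by exact_mod_cast hc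
  push_cast at hdeg
  linarith

end Separator

end SimpleGraph

theorem lambda2_gt_of_many_components_general {V : Type*} [Fintype V] (G : SimpleGraph V)
    [DecidableRel G.Adj] (d : ℕ) (hconn : G.Connected)
    (hreg : G.IsRegularOfDegree d) (S : Finset V)
    (h2 : 2 ≤ Nat.card (G.induce (↑S : Set V)ᶜ).ConnectedComponent)
    (hgt : S.card < Nat.card (G.induce (↑S : Set V)ᶜ).ConnectedComponent) :
    (d : ℝ) - 1 < lambda2 G := by
  classical
  obtain ⟨c₁, c₂, hne, h₁, h₂⟩ := hreg.exists_ne_card_interedges_verts_lt hconn h2 hgt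
  obtain ⟨x, hx0, hx⟩ := G.exists_sum_eq_zero_and_lt_rayleigh
    (SimpleGraph.ConnectedComponent.disjoint_verts hne)
    (fun _ hu _ hv => SimpleGraph.ConnectedComponent.not_adj_of_ne hne hu hv)
    (hreg.sub_one_mul_card_verts_lt h₁) (hreg.sub_one_mul_card_verts_lt h₂)
  exact hreg.lt_lambda2 (by linarith) hx0 hx

/-- **Claim.** Let `G` be a connected `d`-regular graph with `d ≥ 3`. If there is a proper
vertex subset `S` such that `G - S` has at least two connected components and strictly more
than `|S|` connected components, then `λ₂(G) > d - 1`. -/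
theorem lambda2_gt_of_many_components {V : Type*} [Fintype V] (G : SimpleGraph V)
    [DecidableRel G.Adj] (d : ℕ) (hd : 3 ≤ d) (hconn : G.Connected)
    (hreg : G.IsRegularOfDegree d) (S : Finset V) (hproper : (↑S : Set V) ≠ Set.univ)
    (h2 : 2 ≤ Nat.card (G.induce (↑S : Set V)ᶜ).ConnectedComponent)
    (hgt : S.card < Nat.card (G.induce (↑S : Set V)ᶜ).ConnectedComponent) :
    (d : ℝ) - 1 < lambda2 G :=
  lambda2_gt_of_many_components_general G d hconn hreg S h2 hgt
end

section
/- Let H be a connected k-regular graph with k ≥ 1, and let S be a nonempty subset of V(H) such that the number of odd components of H − S is at least |S| + 2. Then there are at least three odd components Q of H − S satisfying e_H(V(Q), V(H) ∖ V(Q)) < k. -/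
/-!
Every component `Q` of `H - S` is nonempty and misses `S ≠ ∅`, so by connectivity it has at least
one boundary edge, and all its boundary edges end in `S`. Summing over the odd components, the
boundary edges number at most `∑_{v ∈ S} deg v = k|S|`. If at most two odd components had fewer
than `k` boundary edges, the remaining `≥ |S|` would already account for `k|S|` of them, leaving no
room for the at least one boundary edge of each of the others (or, when there are none, `k = 0`
and no room for the at least `|S| + 2` edges in total).
-/

open Finset

lemma two_lt_card_filter_lt_of_sum_le {ι : Type*} {O : Finset ι} {f : ι → ℕ} {k s : ℕ}
    (hf : ∀ i, 0 < f i) (hsum : ∑ i ∈ O, f i ≤ k * s) (hO : s + 2 ≤ #O) :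
    2 < #{i ∈ O | f i < k} := by
  have hsmall : #{i ∈ O | f i < k} ≤ ∑ i ∈ O with f i < k, f i := by
    simpa using card_nsmul_le_sum _ f 1 fun i _ => hf i
  have hlarge : #{i ∈ O | ¬f i < k} * k ≤ ∑ i ∈ O with ¬f i < k, f i :=
    card_nsmul_le_sum _ f k fun i hi => not_lt.mp (mem_filter.mp hi).2
  have hall : #O ≤ ∑ i ∈ O, f i := by simpa using card_nsmul_le_sum _ f 1 fun i _ => hf i
  have hsplit := sum_filter_add_sum_filter_not O (f · < k) f
  have hcard := card_filter_add_card_filter_not (s := O) (f · < k)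
  by_contra! ht
  interval_cases #{i ∈ O | f i < k} <;> nlinarith

namespace SimpleGraph

variable {V : Type*} {G : SimpleGraph V}

lemma ConnectedComponent.mem_image_supp_of_adj {s : Set V} {c : (G.induce s).ConnectedComponent}
    {u v : V} (hu : u ∈ Subtype.val '' c.supp) (huv : G.Adj u v) (hv : v ∈ s) :
    v ∈ Subtype.val '' c.supp := by
  obtain ⟨u, hu, rfl⟩ := hu
  refine ⟨⟨v, hv⟩, ?_, rfl⟩
  rw [ConnectedComponent.mem_supp_iff] at hu ⊢
  rw [← hu]
  exact ConnectedComponent.connectedComponentMk_eq_of_adj (G := G.induce s) huv.symm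

lemma Connected.crossPairs_compl_pos [Finite V] (hG : G.Connected) {A : Set V}
    (hA : A.Nonempty) (hA' : Aᶜ.Nonempty) : 0 < crossPairs G A Aᶜ := by
  obtain ⟨u, hu⟩ := hA
  obtain ⟨v, hv⟩ := hA'
  obtain ⟨d, -, hd₁, hd₂⟩ := (hG.preconnected u v).some.exists_boundary_dart A hu hv
  exact Set.ncard_pos (Set.toFinite _) |>.mpr ⟨(d.fst, d.snd), hd₁, hd₂, d.adj⟩

lemma IsRegularOfDegree.crossPairs_univ [Fintype V] [DecidableRel G.Adj] {k : ℕ}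
    (hG : G.IsRegularOfDegree k) (B : Finset V) : crossPairs G Set.univ B = k * #B := by
  classical
  unfold crossPairs
  rw [Set.ncard_eq_toFinset_card', Set.toFinset_ofPred, card_filter, Fintype.sum_prod_type_right,
    ← sum_filter_add_sum_filter_not univ (· ∈ B), filter_mem_eq_inter, univ_inter]
  have hdeg : ∀ v, ∑ u, (if G.Adj u v then 1 else 0) = k := fun v => by
    simp_rw [← card_filter, G.adj_comm _ v, ← neighborFinset_eq_filter,
      card_neighborFinset_eq_degree, hG v]
  simp +contextual [hdeg, mul_comm]

end SimpleGraph

section crossPairs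

variable {V : Type*} {G : SimpleGraph V}

lemma crossPairs_image_supp_compl {s : Set V} (c : (G.induce s).ConnectedComponent) :
    crossPairs G (Subtype.val '' c.supp) (Subtype.val '' c.supp)ᶜ =
      crossPairs G (Subtype.val '' c.supp) sᶜ := by
  unfold crossPairs
  congr 1
  ext ⟨u, v⟩
  simp only [Set.mem_ofPred_eq, Set.mem_compl_iff, and_congr_right_iff]
  intro hu
  refine and_congr_left fun huv => ⟨fun hv hvs => hv (c.mem_image_supp_of_adj hu huv hvs), ?_⟩
  rintro hvs ⟨v, -, rfl⟩
  exact hvs v.2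

lemma sum_crossPairs_le [Finite V] {ι : Type*} (t : Finset ι) {A : ι → Set V}
    (hA : (t : Set ι).PairwiseDisjoint A) (B : Set V) :
    ∑ i ∈ t, crossPairs G (A i) B ≤ crossPairs G Set.univ B := by
  unfold crossPairs
  rw [← finsum_mem_coe_finset, ← t.finite_toSet.ncard_biUnion (fun _ _ => Set.toFinite _)]
  · refine Set.ncard_le_ncard ?_
    simp only [Set.iUnion_subset_iff]
    exact fun i _ p ⟨_, h₂, h₃⟩ => ⟨trivial, h₂, h₃⟩
  · exact fun i hi j hj hij => Set.disjoint_left.mpr fun p h h' =>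
      Set.disjoint_left.mp (hA hi hj hij) h.1 h'.1

end crossPairs

theorem three_odd_components_with_small_boundary_general {V : Type*} [Fintype V] (H : SimpleGraph V)
    [DecidableRel H.Adj] (k : ℕ) (hconn : H.Connected)
    (hreg : H.IsRegularOfDegree k) (S : Finset V) (hS : S.Nonempty)
    (hodd : S.card + 2 ≤
      Nat.card {c : (H.induce (↑S : Set V)ᶜ).ConnectedComponent // Odd (Nat.card c.supp)}) :
    ∃ c₁ c₂ c₃ : (H.induce (↑S : Set V)ᶜ).ConnectedComponent,
      c₁ ≠ c₂ ∧ c₁ ≠ c₃ ∧ c₂ ≠ c₃ ∧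
      ∀ c ∈ [c₁, c₂, c₃], Odd (Nat.card c.supp) ∧
        crossPairs H (Subtype.val '' c.supp) (Subtype.val '' c.supp)ᶜ < k := by
  classical
  set Q := fun c : (H.induce (↑S : Set V)ᶜ).ConnectedComponent => Subtype.val '' c.supp
  set O : Finset (H.induce (↑S : Set V)ᶜ).ConnectedComponent := {c | Odd (Nat.card c.supp)}
  have hpos c : 0 < crossPairs H (Q c) (Q c)ᶜ := by
    obtain ⟨s, hs⟩ := hS
    refine hconn.crossPairs_compl_pos (c.nonempty_supp.image _) ⟨s, ?_⟩
    rintro ⟨v, -, rfl⟩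
    exact v.2 hs
  have hsum : ∑ c ∈ O, crossPairs H (Q c) (Q c)ᶜ ≤ k * #S := calc
    _ = ∑ c ∈ O, crossPairs H (Q c) S := by simp_rw [Q, crossPairs_image_supp_compl, compl_compl]
    _ ≤ crossPairs H Set.univ S := sum_crossPairs_le O
        (fun c _ d _ hcd => Set.disjoint_image_of_injective Subtype.val_injective
          (SimpleGraph.pairwise_disjoint_supp_connectedComponent _ hcd)) _
    _ = k * #S := hreg.crossPairs_univ S
  have hO : #S + 2 ≤ #O := by simpa [O, Nat.card_eq_fintype_card, Fintype.card_subtype] using hodd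
  obtain ⟨c₁, h₁, c₂, h₂, c₃, h₃, h₁₂, h₁₃, h₂₃⟩ :=
    two_lt_card.mp (two_lt_card_filter_lt_of_sum_le hpos hsum hO)
  have hsmall c (hc : c ∈ O.filter fun c => crossPairs H (Q c) (Q c)ᶜ < k) :
      Odd (Nat.card c.supp) ∧ crossPairs H (Q c) (Q c)ᶜ < k :=
    ⟨(mem_filter.mp (mem_filter.mp hc).1).2, (mem_filter.mp hc).2⟩
  refine ⟨c₁, c₂, c₃, h₁₂, h₁₃, h₂₃, ?_⟩
  simp only [List.mem_cons, List.not_mem_nil, or_false]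
  rintro c (rfl | rfl | rfl)
  exacts [hsmall _ h₁, hsmall _ h₂, hsmall _ h₃]

/-- If `H` is a connected `k`-regular graph (`k ≥ 1`) and `S` is a nonempty vertex subset such
that `H - S` has at least `|S| + 2` odd components, then at least three odd components `Q` of
`H - S` satisfy `e_H(V(Q), V(H) \ V(Q)) < k`. -/
theorem three_odd_components_with_small_boundary {V : Type*} [Fintype V] (H : SimpleGraph V)
    [DecidableRel H.Adj] (k : ℕ) (hk : 1 ≤ k) (hconn : H.Connected)
    (hreg : H.IsRegularOfDegree k) (S : Finset V) (hS : S.Nonempty)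
    (hodd : S.card + 2 ≤
      Nat.card {c : (H.induce (↑S : Set V)ᶜ).ConnectedComponent // Odd (Nat.card c.supp)}) :
    ∃ c₁ c₂ c₃ : (H.induce (↑S : Set V)ᶜ).ConnectedComponent,
      c₁ ≠ c₂ ∧ c₁ ≠ c₃ ∧ c₂ ≠ c₃ ∧
      ∀ c ∈ [c₁, c₂, c₃], Odd (Nat.card c.supp) ∧
        crossPairs H (Subtype.val '' c.supp) (Subtype.val '' c.supp)ᶜ < k :=
  three_odd_components_with_small_boundary_general H k hconn hreg S hS hodd
end

section
/- Let d ≥ 3 be a real number and let p, s be real numbers with p ≥ d and s ≥ d. Then the 3×3 real matrix B = [[d − d/p, d/p, 0], [d/s, 0, d − d/s], [0, d, 0]] has d as an eigenvalue, and its second largest eigenvalue equals (−d/p + √((d/p)² + 4d²(1 − 1/s)(1 − 1/p)))/2. -/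
/-!
Every row of `B` sums to `d`, so `(1, 1, 1)` is an eigenvector for `d` and the characteristic
polynomial splits off the factor `X - d`. With `a = d/p` and `b = d/s`, the cofactor is
`X² + aX - (d - a)(d - b)`, whose roots are `(-a ± √(a² + 4(d - a)(d - b)))/2`. For `0 ≤ a, b ≤ d`
the larger of these lies between the smaller one and `d`, so it is the middle eigenvalue.
-/

open Polynomial

def quotientMatrix {R : Type*} [Zero R] [Sub R] (a b d : R) : Matrix (Fin 3) (Fin 3) R :=
  !![d - a, a, 0; b, 0, d - b; 0, d, 0]

theorem charpoly_quotientMatrix {R : Type*} [CommRing R] (a b d : R) :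
    (quotientMatrix a b d).charpoly = (X - C d) * (X ^ 2 + C a * X - C ((d - a) * (d - b))) := by
  rw [Matrix.charpoly, Matrix.det_fin_three]
  simp [quotientMatrix]
  ring

theorem X_sq_add_C_mul_X_sub_C_eq_mul {K : Type*} [Field K] [NeZero (2 : K)] {a c r : K}
    (hr : r ^ 2 = a ^ 2 + 4 * c) :
    X ^ 2 + C a * X - C c = (X - C ((-a + r) / 2)) * (X - C ((-a - r) / 2)) := by
  have hsum : C ((-a + r) / 2) + C ((-a - r) / 2) = -C a := by
    rw [← C_add, ← C_neg]; congr 1; field_simp; ring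
  have hprod : C ((-a + r) / 2) * C ((-a - r) / 2) = -C c := by
    rw [← C_mul, ← C_neg]; congr 1; field_simp; linear_combination -hr
  linear_combination X * hsum - hprod

theorem roots_charpoly_quotientMatrix {K : Type*} [Field K] [NeZero (2 : K)] {a b d r : K}
    (hr : r ^ 2 = a ^ 2 + 4 * ((d - a) * (d - b))) :
    (quotientMatrix a b d).charpoly.roots = {(-a - r) / 2, (-a + r) / 2, d} := by
  rw [charpoly_quotientMatrix, X_sq_add_C_mul_X_sub_C_eq_mul hr, mul_comm, mul_comm (X - C _)]
  simp [roots_mul, X_sub_C_ne_zero]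

theorem Multiset.sort_insert_insert_singleton {α : Type*} [LinearOrder α] {x y z : α}
    (hxy : x ≤ y) (hyz : y ≤ z) : Multiset.sort ({x, y, z} : Multiset α) (· ≤ ·) = [x, y, z] :=
  List.mergeSort_eq_self (r := fun a b => a ≤ b) (l := [x, y, z])
    (by simp [hxy, hyz, hxy.trans hyz])

theorem neg_add_sqrt_div_two_le {a c d : ℝ} (hd : 0 ≤ 2 * d + a) (hc : c ≤ d * (d + a)) :
    (-a + √(a ^ 2 + 4 * c)) / 2 ≤ d := by
  have : √(a ^ 2 + 4 * c) ≤ 2 * d + a := Real.sqrt_le_iff.mpr ⟨hd, by nlinarith⟩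
  linarith

/-- **Quotient matrix eigenvalues.** For real `d ≥ 3` and `p, s ≥ d`, the matrix
`B = [[d - d/p, d/p, 0], [d/s, 0, d - d/s], [0, d, 0]]` has all real eigenvalues (its
characteristic polynomial has three real roots, with multiplicity), `d` is an eigenvalue,
and the second largest eigenvalue (the middle entry of the increasingly sorted list of roots)
equals `(-d/p + √((d/p)² + 4d²(1 - 1/s)(1 - 1/p)))/2`. -/
theorem quotient_matrix_eigenvalues (d p s : ℝ) (hd : 3 ≤ d) (hp : d ≤ p) (hs : d ≤ s) :
    Multiset.card (Matrix.charpoly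
        (!![d - d / p, d / p, 0; d / s, 0, d - d / s; 0, d, 0] : Matrix (Fin 3) (Fin 3) ℝ)).roots
      = 3 ∧
    d ∈ (Matrix.charpoly
        (!![d - d / p, d / p, 0; d / s, 0, d - d / s; 0, d, 0] : Matrix (Fin 3) (Fin 3) ℝ)).roots ∧
    ((Matrix.charpoly
        (!![d - d / p, d / p, 0; d / s, 0, d - d / s; 0, d, 0] : Matrix (Fin 3) (Fin 3) ℝ)).roots.sort
          (· ≤ ·)).getD 1 0
      = (-(d / p) + Real.sqrt ((d / p) ^ 2 + 4 * d ^ 2 * (1 - 1 / s) * (1 - 1 / p))) / 2 := by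
  have hp0 : 0 < p := by linarith
  have hs0 : 0 < s := by linarith
  have hdisc : 4 * d ^ 2 * (1 - 1 / s) * (1 - 1 / p) = 4 * ((d - d / p) * (d - d / s)) := by
    field_simp
  set a := d / p
  set b := d / s
  have ha : 0 ≤ a ∧ a ≤ 1 := ⟨by positivity, (div_le_one hp0).mpr hp⟩
  have hb : 0 ≤ b ∧ b ≤ 1 := ⟨by positivity, (div_le_one hs0).mpr hs⟩
  have hc : 0 ≤ (d - a) * (d - b) := mul_nonneg (by linarith) (by linarith)
  have hr := Real.sq_sqrt (by positivity : 0 ≤ a ^ 2 + 4 * ((d - a) * (d - b)))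
  have hmid : (-a + √(a ^ 2 + 4 * ((d - a) * (d - b)))) / 2 ≤ d :=
    neg_add_sqrt_div_two_le (by linarith) (by nlinarith)
  have hsqrt := Real.sqrt_nonneg (a ^ 2 + 4 * ((d - a) * (d - b)))
  rw [show !![d - a, a, 0; b, 0, d - b; 0, d, 0] = quotientMatrix a b d from rfl,
    roots_charpoly_quotientMatrix hr, hdisc,
    Multiset.sort_insert_insert_singleton (by linarith) hmid]
  exact ⟨rfl, by simp, rfl⟩
end
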